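/- arXiv:1207.3121 — 6 statements merged into one kernel-verified Lean document; each statement's English description precedes it below -/
import Mathlib

section
/- Let ℓ ≥ 1 be a natural number and let M be an abelian group (ℤ-module). For all a, b ∈ M, in the ℓ-fold tensor power M^{⊗ℓ} (tensor product over ℤ) the element (a + ℓ·b)^{⊗ℓ} − a^{⊗ℓ} − ℓ·∑_{i=0}^{ℓ−1} a^{⊗i} ⊗ b ⊗ a^{⊗(ℓ−1−i)} lies in the subgroup ℓ²·M^{⊗ℓ}. -/
open scoped TensorProduct

/-- Let `ℓ ≥ 1` and let `M` be an abelian group. For all `a b : M`,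
in the `ℓ`-fold tensor power `M^{⊗ℓ}` (over `ℤ`) the element
`(a + ℓ•b)^{⊗ℓ} − a^{⊗ℓ} − ℓ • ∑_{i} a^{⊗i} ⊗ b ⊗ a^{⊗(ℓ−1−i)}`
lies in the subgroup `ℓ² • M^{⊗ℓ}`, i.e. it is `ℓ²` times some element. -/
theorem stmt_4 (ℓ : ℕ) (hℓ : 1 ≤ ℓ) (M : Type*) [AddCommGroup M] (a b : M) :
    ∃ z : ⨂[ℤ] (_ : Fin ℓ), M,
      (PiTensorProduct.tprod ℤ (fun _ : Fin ℓ => a + ℓ • b))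
        - (PiTensorProduct.tprod ℤ (fun _ : Fin ℓ => a))
        - (ℓ : ℤ) • ∑ i : Fin ℓ,
            (PiTensorProduct.tprod ℤ (fun j : Fin ℓ => if j = i then b else a))
      = ((ℓ : ℤ) ^ 2) • z := by
  classical
  set f : MultilinearMap ℤ (fun _ : Fin ℓ => M) (⨂[ℤ] (_ : Fin ℓ), M) :=
    PiTensorProduct.tprod ℤ with hf
  set g : Finset (Fin ℓ) → ⨂[ℤ] (_ : Fin ℓ), M :=
    fun s => (ℓ:ℤ)^s.card • f (s.piecewise (fun _ => b) (fun _ => a)) with hg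
  have key : f (fun _ => a + ℓ • b) = ∑ s : Finset (Fin ℓ), g s := by
    have h1 : (fun _ : Fin ℓ => a + ℓ • b)
        = (fun _ : Fin ℓ => a) + (fun _ : Fin ℓ => ℓ • b) := rfl
    rw [h1, f.map_add_univ]
    rw [← Fintype.sum_bijective _ (Function.Involutive.bijective (compl_involutive))
      _ _ (fun s => rfl)]
    refine Finset.sum_congr rfl fun s _ => ?_
    rw [Finset.piecewise_compl]
    have h2 : Finset.piecewise s (fun _ : Fin ℓ => ℓ • b) (fun _ => a)
        = s.piecewise (fun i => (fun _ : Fin ℓ => (ℓ:ℤ))  i •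
            (s.piecewise (fun _ : Fin ℓ => b) (fun _ => a)) i)
          (s.piecewise (fun _ : Fin ℓ => b) (fun _ => a)) := by
      funext j
      by_cases hj : j ∈ s <;> simp [Finset.piecewise, hj, natCast_zsmul]
    rw [h2, f.map_piecewise_smul, hg]
    simp
  -- split the sum by cardinality
  have hsplit : Finset.univ.filter (fun s : Finset (Fin ℓ) => ¬ 2 ≤ s.card)
      = insert (∅ : Finset (Fin ℓ)) (Finset.univ.image fun i : Fin ℓ => {i}) := by
    ext s
    simp only [Finset.mem_filter, Finset.mem_univ, true_and, Finset.mem_insert,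
      Finset.mem_image]
    constructor
    · intro h
      have h1 : s.card = 0 ∨ s.card = 1 := by omega
      rcases h1 with h1 | h1
      · left; exact Finset.card_eq_zero.mp h1
      · right; obtain ⟨i, rfl⟩ := Finset.card_eq_one.mp h1; exact ⟨i, rfl⟩
    · rintro (rfl | ⟨i, rfl⟩) <;> simp
  refine ⟨∑ s ∈ Finset.univ.filter (fun s : Finset (Fin ℓ) => 2 ≤ s.card),
    (ℓ:ℤ)^(s.card - 2) • f (s.piecewise (fun _ => b) (fun _ => a)), ?_⟩
  have hbig : ∑ s ∈ Finset.univ.filter (fun s : Finset (Fin ℓ) => 2 ≤ s.card), g s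
      = ((ℓ:ℤ)^2) • ∑ s ∈ Finset.univ.filter (fun s : Finset (Fin ℓ) => 2 ≤ s.card),
          (ℓ:ℤ)^(s.card - 2) • f (s.piecewise (fun _ => b) (fun _ => a)) := by
    rw [Finset.smul_sum]
    refine Finset.sum_congr rfl fun s hs => ?_
    have hs2 : 2 ≤ s.card := (Finset.mem_filter.mp hs).2
    simp only [hg]
    rw [smul_smul, ← pow_add, Nat.add_sub_cancel' hs2]
  have hsmall : ∑ s ∈ Finset.univ.filter (fun s : Finset (Fin ℓ) => ¬ 2 ≤ s.card), g s
      = f (fun _ => a) + (ℓ:ℤ) • ∑ i : Fin ℓ, f (fun j => if j = i then b else a) := by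
    rw [hsplit, Finset.sum_insert (by simp), Finset.sum_image
      (fun i _ j _ h => Finset.singleton_injective h)]
    have h0 : g ∅ = f (fun _ => a) := by simp [hg]
    have h1 : ∀ i : Fin ℓ, g {i} = (ℓ:ℤ) • f (fun j => if j = i then b else a) := by
      intro i
      have hpw : ({i} : Finset (Fin ℓ)).piecewise (fun _ => b) (fun _ => a)
          = fun j => if j = i then b else a := by
        funext j; simp [Finset.piecewise, Finset.mem_singleton]
      simp [hg, hpw]
    simp only [h0, h1, ← Finset.smul_sum]
  have hall : ∑ s : Finset (Fin ℓ), g s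
      = ∑ s ∈ Finset.univ.filter (fun s : Finset (Fin ℓ) => 2 ≤ s.card), g s
        + ∑ s ∈ Finset.univ.filter (fun s : Finset (Fin ℓ) => ¬ 2 ≤ s.card), g s :=
    (Finset.sum_filter_add_sum_filter_not _ _ _).symm
  show f (fun _ => a + ℓ • b) - f (fun _ => a)
      - (ℓ:ℤ) • ∑ i : Fin ℓ, f (fun j => if j = i then b else a) = _
  rw [key, hall, hbig, hsmall]
  abel
end

section
/- Let C be a preadditive category with small coproducts, I an index type, and M : I → C a family of objects; write M = ∐_{i∈I} M_i with coprojections j_i : M_i → M, and let p_i : M → M_i be the canonical projections determined by p_i ∘ j_i = id and p_i ∘ j_k = 0 for k ≠ i. Assume that each M_i is compact with respect to this coproduct, in the sense that every morphism M_i → M factors through the canonical morphism ∐_{j∈J} M_j → M for some finite subset J ⊆ I. If ψ : M → M is an endomorphism such that p_i ∘ ψ = 0 for every i ∈ I, then ψ = 0. -/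
open CategoryTheory CategoryTheory.Limits

/-- Let `C` be a preadditive category with small coproducts,
`M : I → C` a family of objects with coproduct `∐ M` (coprojections `Sigma.ι M i`),
and let `p i : ∐ M ⟶ M i` be the canonical projections, determined by
`Sigma.ι M i ≫ p i = 𝟙` and `Sigma.ι M k ≫ p i = 0` for `k ≠ i`. Assume each `M i` is
compact with respect to this coproduct: every morphism `M i ⟶ ∐ M` factors through the
canonical morphism `∐_{j ∈ J} M j ⟶ ∐ M` for some finite subset `J ⊆ I`. If
`ψ : ∐ M ⟶ ∐ M` satisfies `p i ∘ ψ = 0` for all `i`, then `ψ = 0`. -/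
theorem stmt_5 {C : Type*} [Category C] [Preadditive C] [HasCoproducts C]
    {I : Type _} (M : I → C)
    (p : ∀ i : I, (∐ M) ⟶ M i)
    (hp_id : ∀ i : I, Sigma.ι M i ≫ p i = 𝟙 (M i))
    (hp_zero : ∀ i k : I, k ≠ i → Sigma.ι M k ≫ p i = 0)
    (hcompact : ∀ (i : I) (f : M i ⟶ ∐ M),
      ∃ (J : Finset I) (g : M i ⟶ ∐ (fun j : J => M (j : I))),
        f = g ≫ Sigma.desc (fun j : J => Sigma.ι M (j : I)))
    (ψ : (∐ M) ⟶ ∐ M) (hψ : ∀ i : I, ψ ≫ p i = 0) :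
    ψ = 0 := by
  apply Sigma.hom_ext
  intro i
  obtain ⟨J, g, hg⟩ := hcompact i (Sigma.ι M i ≫ ψ)
  have hid : (𝟙 (∐ (fun j : J => M (j : I)))) =
      ∑ j : J, (Sigma.desc (fun j : J => Sigma.ι M (j : I)) ≫ p (j : I)) ≫
        Sigma.ι (fun j : J => M (j : I)) j := by
    apply Sigma.hom_ext
    intro k
    simp only [Category.comp_id, Preadditive.comp_sum]
    rw [Fintype.sum_eq_single k]
    · rw [← Category.assoc, ← Category.assoc, colimit.ι_desc]
      show _ = ((Sigma.ι M (k : I)) ≫ p (k : I)) ≫ _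
      rw [hp_id, Category.id_comp]
    · intro j hj
      have : (k : I) ≠ (j : I) := fun h => hj (Subtype.ext h.symm)
      rw [← Category.assoc, ← Category.assoc, colimit.ι_desc]
      show ((Sigma.ι M (k : I)) ≫ p (j : I)) ≫ _ = (0 : _ ⟶ _)
      rw [hp_zero _ _ this, Limits.zero_comp]
  have hg0 : ∀ j : J, g ≫ (Sigma.desc (fun j : J => Sigma.ι M (j : I)) ≫ p (j : I)) = 0 := by
    intro j
    rw [← Category.assoc, ← hg, Category.assoc, hψ, Limits.comp_zero]
  calc Sigma.ι M i ≫ ψ = g ≫ Sigma.desc (fun j : J => Sigma.ι M (j : I)) := hg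
    _ = (g ≫ 𝟙 _) ≫ Sigma.desc (fun j : J => Sigma.ι M (j : I)) := by rw [Category.comp_id]
    _ = 0 := by
        rw [hid, Preadditive.comp_sum, Preadditive.sum_comp]
        refine Finset.sum_eq_zero fun j _ => ?_
        have h2 : (g ≫ Sigma.desc (fun j : J => Sigma.ι M (j : I))) ≫ p (j : I) = 0 := by
          rw [Category.assoc]; exact hg0 j
        simp only [← Category.assoc]
        rw [h2, Limits.zero_comp, Limits.zero_comp]
    _ = Sigma.ι M i ≫ 0 := by rw [Limits.comp_zero]
end

section
/- Let ℓ be a prime number and a ≥ 1 a natural number. Then there exists a natural number N₀ such that for every N ≥ N₀ and every natural number δ with 1 ≤ δ ≤ a, the binomial coefficient C((ℓ−1)·ℓ^N − 1 − (ℓ−1)·δ, δ) is divisible by ℓ. -/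
/-! The binomial coefficient has upper index `n ≡ -1 - (ℓ - 1)δ (mod ℓ^N)`, hence `n ≡ δ - 1
(mod ℓ)`. By Lucas' theorem either the last base-`ℓ` digit of `n` is smaller than that of `δ`,
and `ℓ ∣ C(n, δ)`, or `δ` ends in the digit `0` and `n` in `ℓ - 1`; stripping both digits gives
the same situation modulo `ℓ^(N-1)`. Since `0 < δ < ℓ^N`, the descent ends in the first case. -/

section

variable {p : ℕ} [hp : Fact p.Prime]

theorem dvd_choose_of_mod_lt_mod {n k : ℕ} (h : n % p < k % p) : p ∣ n.choose k := by
  have hlucas := Choose.choose_modEq_choose_mod_mul_choose_div_nat (p := p) (n := n) (k := k)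
  rw [Nat.choose_eq_zero_of_lt h, zero_mul] at hlucas
  exact Nat.modEq_zero_iff_dvd.mp hlucas

theorem choose_mul_add_sub_one_mul_modEq_choose (a b : ℕ) :
    (p * a + (p - 1)).choose (p * b) ≡ a.choose b [MOD p] := by
  have hp0 : 0 < p := hp.out.pos
  have hlt : p - 1 < p := Nat.sub_lt hp0 one_pos
  have hmod : (p * a + (p - 1)) % p = p - 1 := by
    rw [Nat.mul_add_mod, Nat.mod_eq_of_lt hlt]
  have hdiv : (p * a + (p - 1)) / p = a := by
    rw [Nat.mul_add_div hp0, Nat.div_eq_of_lt hlt, add_zero]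
  simpa [hmod, hdiv, hp0] using
    Choose.choose_modEq_choose_mod_mul_choose_div_nat (p := p) (n := p * a + (p - 1)) (k := p * b)

theorem dvd_choose_of_add_one_add_mul_modEq {N n δ : ℕ} (hδ₀ : 0 < δ) (hδ : δ < p ^ N)
    (hcong : n + 1 + p * δ ≡ δ [MOD p ^ N]) : p ∣ n.choose δ := by
  induction N generalizing n δ with
  | zero => rw [pow_zero] at hδ; omega
  | succ N ih =>
    have hp1 : 1 < p := hp.out.one_lt
    have hlow : (n + 1) % p = δ % p := by
      have := hcong.of_dvd (dvd_pow_self p N.succ_ne_zero)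
      rwa [Nat.ModEq, Nat.add_mul_mod_self_left] at this
    by_cases hδp : δ % p = 0
    · obtain ⟨δ', rfl⟩ := Nat.dvd_of_mod_eq_zero hδp
      obtain ⟨m, hm⟩ := Nat.dvd_of_mod_eq_zero (hlow.trans hδp)
      obtain ⟨a, rfl⟩ : ∃ a, m = a + 1 := Nat.exists_eq_succ_of_ne_zero (by rintro rfl; omega)
      have hn : n = p * a + (p - 1) := by rw [mul_add_one] at hm; omega
      have hcong' : a + 1 + p * δ' ≡ δ' [MOD p ^ N] := by
        refine Nat.ModEq.mul_left_cancel' hp.out.ne_zero ?_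
        rw [← pow_succ']
        convert hcong using 1
        rw [hm]; ring
      have hδ' : δ' < p ^ N := by
        rw [pow_succ'] at hδ
        exact Nat.lt_of_mul_lt_mul_left hδ
      rw [hn]
      exact (Nat.modEq_zero_iff_dvd.mp
        ((choose_mul_add_sub_one_mul_modEq_choose a δ').trans
          (Nat.modEq_zero_iff_dvd.mpr (ih (Nat.pos_of_mul_pos_left hδ₀) hδ' hcong'))))
    · have hlt : n % p < δ % p := by
        rw [Nat.add_mod_eq_ite, Nat.mod_eq_of_lt hp1] at hlow
        have := Nat.mod_lt n hp.out.pos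
        split_ifs at hlow <;> omega
      exact dvd_choose_of_mod_lt_mod hlt

end

theorem stmt_7_general (ℓ : ℕ) (hℓ : ℓ.Prime) (a : ℕ) :
    ∃ N₀ : ℕ, ∀ N : ℕ, N₀ ≤ N → ∀ δ : ℕ, 1 ≤ δ → δ ≤ a →
      ℓ ∣ Nat.choose ((ℓ - 1) * ℓ ^ N - 1 - (ℓ - 1) * δ) δ := by
  have := Fact.mk hℓ
  refine ⟨a, fun N hN δ hδ₀ hδa => ?_⟩
  have hδN : δ < ℓ ^ N := (hδa.trans hN).trans_lt (Nat.lt_pow_self hℓ.one_lt)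
  have hℓ₁ : 1 ≤ ℓ - 1 := Nat.le_sub_one_of_lt hℓ.one_lt
  have hfit : (ℓ - 1) * δ + 1 ≤ (ℓ - 1) * ℓ ^ N :=
    calc (ℓ - 1) * δ + 1 ≤ (ℓ - 1) * (δ + 1) := by rw [mul_add_one]; omega
      _ ≤ (ℓ - 1) * ℓ ^ N := Nat.mul_le_mul_left _ hδN
  have hsplit : ℓ * δ = (ℓ - 1) * δ + δ := by
    rw [← add_one_mul, Nat.sub_add_cancel hℓ.one_le]
  have hsum : (ℓ - 1) * ℓ ^ N - 1 - (ℓ - 1) * δ + 1 + ℓ * δ = ℓ ^ N * (ℓ - 1) + δ := by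
    rw [hsplit, mul_comm (ℓ ^ N)]; omega
  refine dvd_choose_of_add_one_add_mul_modEq (N := N) hδ₀ hδN ?_
  rw [Nat.ModEq, hsum, Nat.mul_add_mod]

/-- Let `ℓ` be prime and `a ≥ 1`. Then there exists `N₀` such that for
every `N ≥ N₀` and every `δ` with `1 ≤ δ ≤ a`, the binomial coefficient
`C((ℓ−1)·ℓ^N − 1 − (ℓ−1)·δ, δ)` is divisible by `ℓ`. -/
theorem stmt_7 (ℓ : ℕ) (hℓ : ℓ.Prime) (a : ℕ) (ha : 1 ≤ a) :
    ∃ N₀ : ℕ, ∀ N : ℕ, N₀ ≤ N → ∀ δ : ℕ, 1 ≤ δ → δ ≤ a →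
      ℓ ∣ Nat.choose ((ℓ - 1) * ℓ ^ N - 1 - (ℓ - 1) * δ) δ :=
  stmt_7_general ℓ hℓ a
end

section
/- Let H be a (ℤ×ℤ)-graded ring which is commutative in the bigraded sense (x·y = (−1)^{pq}·y·x whenever x is homogeneous of bidegree (p,q₁) and y homogeneous of bidegree (q,q₂)), and suppose that H^{(p,q)} = 0 whenever q < 0, that H^{(p,0)} = 0 whenever p ≠ 0, and that k := H^{(0,0)} is a field; under these hypotheses the projection π : H → k onto the (0,0)-component is a ring homomorphism. Let φ : M → N be a homomorphism of bidegree (0,0) between bigraded H-modules which are free of finite rank on homogeneous bases. If the k-linear map obtained from φ by applying π to its matrix in homogeneous bases (that is, the induced map k ⊗_H M → k ⊗_H N) is injective, then φ is a split injection: there exists an H-linear map ψ : N → M of bidegree (0,0) with ψ ∘ φ = id_M. -/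
open DirectSum

/-- Let `H` be a `(ℤ×ℤ)`-graded ring (grading `𝒜`), commutative in the
bigraded sense (`x·y = (−1)^{pq}·y·x` for `x` of bidegree `(p, q₁)` and `y` of bidegree
`(q, q₂)`), with `𝒜 (p, q) = ⊥` for `q < 0`, `𝒜 (p, 0) = ⊥` for `p ≠ 0`, and such that
the degree-`(0,0)` component `k := 𝒜 0` is a field (so that the projection
`π : H → k`, `h ↦ (decompose 𝒜 h) 0`, is a ring homomorphism).

A homomorphism `φ : M → N` of bidegree `(0,0)` between bigraded `H`-modules which are
free of finite rank on homogeneous bases — `M = ⊕_{j < m} H(d j)` and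
`N = ⊕_{i < n} H(e i)` — is encoded by its matrix `B` in these bases, whose entries are
homogeneous: `B i j ∈ 𝒜 (d j − e i)`.  If the `k`-linear map `k^m → k^n` obtained by
applying `π` to the matrix (i.e. the induced map `k ⊗_H M → k ⊗_H N`) is injective,
then `φ` is a split injection: there is an `H`-linear map `ψ : N → M` of bidegree
`(0,0)` (a matrix `A` with homogeneous entries `A j i ∈ 𝒜 (e i − d j)`) with
`ψ ∘ φ = id_M`, i.e. `A * B = 1`. -/
theorem stmt_9 {H : Type*} [Ring H] (𝒜 : ℤ × ℤ → AddSubgroup H) [GradedRing 𝒜]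
    (hcomm : ∀ (p q₁ q q₂ : ℤ) (x y : H), x ∈ 𝒜 (p, q₁) → y ∈ 𝒜 (q, q₂) →
      x * y = ((((-1 : ℤˣ) ^ (p * q)) : ℤˣ) : ℤ) • (y * x))
    (hneg : ∀ p q : ℤ, q < 0 → 𝒜 (p, q) = ⊥)
    (hzero : ∀ p : ℤ, p ≠ 0 → 𝒜 (p, 0) = ⊥)
    (hfield : IsField (𝒜 0))
    {m n : ℕ} (d : Fin m → ℤ × ℤ) (e : Fin n → ℤ × ℤ)
    (B : Matrix (Fin n) (Fin m) H)
    (hB : ∀ (i : Fin n) (j : Fin m), B i j ∈ 𝒜 (d j - e i))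
    (hinj : Function.Injective
      (fun (v : Fin m → 𝒜 0) (i : Fin n) =>
        ∑ j : Fin m, ((DirectSum.decompose 𝒜 (B i j)) 0) * v j)) :
    ∃ A : Matrix (Fin m) (Fin n) H,
      (∀ (j : Fin m) (i : Fin n), A j i ∈ 𝒜 (e i - d j)) ∧ A * B = 1 := by
  classical
  letI : Field (𝒜 (0 : ℤ × ℤ)) := hfield.toField
  -- the reduced matrix over k = 𝒜 0
  set B₀ : Matrix (Fin n) (Fin m) (𝒜 (0 : ℤ × ℤ)) :=
    fun i j => (DirectSum.decompose 𝒜 (B i j)) 0 with hB₀def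
  have hB₀_eq : ∀ (i : Fin n) (j : Fin m), d j = e i → (B₀ i j : H) = B i j := by
    intro i j h
    have hmem : B i j ∈ 𝒜 (0 : ℤ × ℤ) := by
      have : d j - e i = 0 := by rw [h]; ring
      rw [← this]; exact hB i j
    simp [hB₀def, DirectSum.decompose_of_mem_same 𝒜 hmem]
  have hB₀_ne : ∀ (i : Fin n) (j : Fin m), d j ≠ e i → (B₀ i j : H) = 0 := by
    intro i j h
    have : d j - e i ≠ 0 := sub_ne_zero_of_ne h
    simp [hB₀def, DirectSum.decompose_of_mem_ne 𝒜 (hB i j) this]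
  -- left inverse over k
  have hker : LinearMap.ker (Matrix.toLin' B₀) = ⊥ := by
    rw [LinearMap.ker_eq_bot]
    have heq : ⇑(Matrix.toLin' B₀) = fun v i => ∑ j, B₀ i j * v j := by
      funext v i
      simp [Matrix.toLin'_apply, Matrix.mulVec, dotProduct]
    rw [heq]
    exact hinj
  obtain ⟨g, hg⟩ := LinearMap.exists_leftInverse_of_injective (Matrix.toLin' B₀) hker
  set A₀ : Matrix (Fin m) (Fin n) (𝒜 (0 : ℤ × ℤ)) := LinearMap.toMatrix' g with hA₀def
  have hA₀B₀ : A₀ * B₀ = 1 := by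
    apply Matrix.toLin'.injective
    rw [Matrix.toLin'_mul, hA₀def, Matrix.toLin'_toMatrix', hg, Matrix.toLin'_one]
  -- lift of A₀ to H
  set Abar : Matrix (Fin m) (Fin n) H :=
    fun j i => if d j = e i then (A₀ j i : H) else 0 with hAbardef
  have hAbar_mem : ∀ j i, Abar j i ∈ 𝒜 (e i - d j) := by
    intro j i
    by_cases h : d j = e i
    · have h0 : e i - d j = 0 := by rw [h]; ring
      rw [hAbardef]
      simp only [if_pos h]
      rw [h0]
      exact (A₀ j i).2
    · rw [hAbardef]; simp only [if_neg h]; exact zero_mem _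
  set E : Matrix (Fin m) (Fin m) H := Abar * B - 1 with hEdef
  have hAB : Abar * B = 1 + E := by rw [hEdef]; abel
  have hE_mem : ∀ j j', E j j' ∈ 𝒜 (d j' - d j) := by
    intro j j'
    have h1 : (Abar * B) j j' ∈ 𝒜 (d j' - d j) := by
      rw [Matrix.mul_apply]
      refine sum_mem fun i _ => ?_
      have := SetLike.mul_mem_graded (hAbar_mem j i) (hB i j')
      rwa [show e i - d j + (d j' - e i) = d j' - d j by ring] at this
    have h2 : (1 : Matrix (Fin m) (Fin m) H) j j' ∈ 𝒜 (d j' - d j) := by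
      by_cases hjj : j = j'
      · subst hjj
        rw [Matrix.one_apply_eq, show d j - d j = 0 by ring]
        exact SetLike.one_mem_graded 𝒜
      · rw [Matrix.one_apply_ne hjj]; exact zero_mem _
    rw [hEdef, Matrix.sub_apply]
    exact sub_mem h1 h2
  -- vanishing of E below the strict increase of the second degree
  have hE0 : ∀ j j', (d j').2 ≤ (d j).2 → E j j' = 0 := by
    intro j j' hle
    by_cases hdd : d j' = d j
    · -- reduce to A₀ * B₀ = 1
      have key : ∀ i, Abar j i * B i j' = ((A₀ j i : H) * (B₀ i j' : H)) := by
        intro i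
        by_cases h : d j = e i
        · rw [hAbardef]
          simp only [if_pos h]
          rw [hB₀_eq i j' (hdd.trans h)]
        · rw [hB₀_ne i j' (by rw [hdd]; exact h), mul_zero, hAbardef]
          simp only [if_neg h, zero_mul]
      have h1 : (Abar * B) j j' = ((A₀ * B₀) j j' : H) := by
        rw [Matrix.mul_apply, Matrix.mul_apply, AddSubmonoidClass.coe_finset_sum]
        refine Finset.sum_congr rfl fun i _ => ?_
        rw [SetLike.GradeZero.coe_mul]
        exact key i
      rw [hEdef, Matrix.sub_apply, h1, hA₀B₀]
      by_cases hjj : j = j'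
      · subst hjj
        rw [Matrix.one_apply_eq, Matrix.one_apply_eq, SetLike.GradeZero.coe_one, sub_self]
      · rw [Matrix.one_apply_ne hjj, Matrix.one_apply_ne hjj, ZeroMemClass.coe_zero, sub_self]
    · -- the degree is zero by hneg / hzero
      have hmem := hE_mem j j'
      have hbot : 𝒜 (d j' - d j) = ⊥ := by
        rcases lt_or_eq_of_le hle with hlt | heq
        · have h2 : (d j' - d j).2 < 0 := by
            have : (d j' - d j).2 = (d j').2 - (d j).2 := rfl
            omega
          have hpair : d j' - d j = ((d j' - d j).1, (d j' - d j).2) := rfl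
          rw [hpair]
          exact hneg _ _ h2
        · have h2 : (d j' - d j).2 = 0 := by
            have : (d j' - d j).2 = (d j').2 - (d j).2 := rfl
            omega
          have h1 : (d j' - d j).1 ≠ 0 := by
            intro hc
            apply hdd
            have : d j' - d j = 0 := by
              rw [Prod.ext_iff]
              exact ⟨hc, h2⟩
            exact sub_eq_zero.mp this
          have hpair : d j' - d j = ((d j' - d j).1, 0) := by
            rw [Prod.ext_iff]
            exact ⟨rfl, h2⟩
          rw [hpair]
          exact hzero _ h1
      rw [hbot] at hmem
      simpa using hmem
  -- nilpotency of E
  set V : Finset ℤ := Finset.univ.image fun t : Fin m => (d t).2 with hVdef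
  set r : Fin m → ℕ := fun j => (V.filter fun v => v < (d j).2).card with hrdef
  have hVmem : ∀ j : Fin m, (d j).2 ∈ V := by
    intro j
    rw [hVdef]
    exact Finset.mem_image_of_mem _ (Finset.mem_univ j)
  have hr_mono : ∀ {j j' : Fin m}, (d j).2 < (d j').2 → r j < r j' := by
    intro j j' h
    apply Finset.card_lt_card
    have hsub : (V.filter fun v => v < (d j).2) ⊆ (V.filter fun v => v < (d j').2) := by
      intro v hv
      simp only [Finset.mem_filter] at hv ⊢
      exact ⟨hv.1, hv.2.trans h⟩
    refine (Finset.ssubset_iff_of_subset hsub).mpr ⟨(d j).2, ?_, ?_⟩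
    · simp only [Finset.mem_filter]
      exact ⟨hVmem j, h⟩
    · simp only [Finset.mem_filter]
      rintro ⟨-, hc⟩
      exact lt_irrefl _ hc
  have hr_lt : ∀ j : Fin m, r j < m := by
    intro j
    have h1 : (V.filter fun v => v < (d j).2) ⊂ V := by
      refine (Finset.ssubset_iff_of_subset (Finset.filter_subset _ _)).mpr
        ⟨(d j).2, hVmem j, ?_⟩
      simp only [Finset.mem_filter]
      rintro ⟨-, hc⟩
      exact lt_irrefl _ hc
    have h2 : V.card ≤ m := by
      rw [hVdef]
      exact le_trans Finset.card_image_le (by simp)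
    exact lt_of_lt_of_le (Finset.card_lt_card h1) h2
  have hpow : ∀ (kk : ℕ) (j j' : Fin m), (E ^ kk) j j' ≠ 0 → r j + kk ≤ r j' := by
    intro kk
    induction kk with
    | zero =>
      intro j j' h
      rw [pow_zero] at h
      by_cases hjj : j = j'
      · subst hjj; omega
      · exact absurd (Matrix.one_apply_ne hjj) h
    | succ kk ih =>
      intro j j' h
      rw [pow_succ, Matrix.mul_apply] at h
      obtain ⟨t, -, ht⟩ := Finset.exists_ne_zero_of_sum_ne_zero h
      have h1 : (E ^ kk) j t ≠ 0 := fun hc => ht (by rw [hc, zero_mul])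
      have h2 : E t j' ≠ 0 := fun hc => ht (by rw [hc, mul_zero])
      have h3 : (d t).2 < (d j').2 := by
        by_contra hc
        exact h2 (hE0 t j' (not_lt.mp hc))
      have h4 := ih j t h1
      have h5 := hr_mono h3
      omega
  have hEm : E ^ m = 0 := by
    ext j j'
    rw [Matrix.zero_apply]
    by_contra hc
    have h1 := hpow m j j' hc
    have h2 := hr_lt j'
    omega
  -- homogeneity of entries of powers
  have hpow_mem : ∀ (F : Matrix (Fin m) (Fin m) H), (∀ j j', F j j' ∈ 𝒜 (d j' - d j)) →
      ∀ (kk : ℕ) (j j' : Fin m), (F ^ kk) j j' ∈ 𝒜 (d j' - d j) := by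
    intro F hF kk
    induction kk with
    | zero =>
      intro j j'
      rw [pow_zero]
      by_cases hjj : j = j'
      · subst hjj
        rw [Matrix.one_apply_eq, show d j - d j = 0 by ring]
        exact SetLike.one_mem_graded 𝒜
      · rw [Matrix.one_apply_ne hjj]; exact zero_mem _
    | succ kk ih =>
      intro j j'
      rw [pow_succ, Matrix.mul_apply]
      refine sum_mem fun t _ => ?_
      have := SetLike.mul_mem_graded (ih j t) (hF t j')
      rwa [show d t - d j + (d j' - d t) = d j' - d j by ring] at this
  have hE_neg : ∀ j j', (-E) j j' ∈ 𝒜 (d j' - d j) := by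
    intro j j'
    rw [Matrix.neg_apply]
    exact neg_mem (hE_mem j j')
  -- geometric series inverse
  set N : Matrix (Fin m) (Fin m) H := ∑ kk ∈ Finset.range m, (-E) ^ kk with hNdef
  have hN_mem : ∀ j j', N j j' ∈ 𝒜 (d j' - d j) := by
    intro j j'
    have : N j j' = ∑ kk ∈ Finset.range m, ((-E) ^ kk) j j' := by
      rw [hNdef, Matrix.sum_apply]
    rw [this]
    exact sum_mem fun kk _ => hpow_mem (-E) hE_neg kk j j'
  have hNE : N * (1 + E) = 1 := by
    have hEm' : (-E) ^ m = 0 := by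
      rw [neg_pow, hEm, mul_zero]
    have h2 : N * (-E - 1) = -1 := by
      have := geom_sum_mul (-E) m
      rw [hEm', zero_sub] at this
      rw [hNdef]
      exact this
    have h3 : -(N * (1 + E)) = -1 := by
      rw [← h2, ← mul_neg]
      congr 1
      abel
    exact neg_injective h3
  refine ⟨N * Abar, ?_, ?_⟩
  · intro j i
    rw [Matrix.mul_apply]
    refine sum_mem fun t _ => ?_
    have := SetLike.mul_mem_graded (hN_mem j t) (hAbar_mem t i)
    rwa [show d t - d j + (e i - d t) = e i - d j by ring] at this
  · calc (N * Abar) * B = N * (Abar * B) := Matrix.mul_assoc _ _ _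
      _ = N * (1 + E) := by rw [hAB]
      _ = 1 := hNE
end

section
/- Let R be a commutative ring, ρ ∈ R, and τ : ℕ → R a sequence satisfying τ(i)² = τ(i+1)·ρ for every i ∈ ℕ. For n ∈ ℕ set T(n) = ∏_{i ∈ B(n)} τ(i), where B(n) ⊆ ℕ is the set of positions of the nonzero binary digits of n. Then for all p, q ∈ ℕ one has T(p)·T(q) = T(p+q)·ρ^{σ(p,q)}, where σ(p,q) = s(p) + s(q) − s(p+q) is the number of carries occurring in the addition of p and q in base 2, with s(n) denoting the sum of the binary digits of n. -/
/-!
Adding `p` and `q` with an incoming carry `c ≤ 1` is a full adder on the lowest bit: the factors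
`τ 0` contributed by the three inputs give `τ 0 ^ (r + 2 * c')`, where `r` is the output bit and `c'`
the outgoing carry, and `τ 0 ^ 2 = τ 1 * ρ` turns the square into the carry `τ 1` at the next
position, at the price of one factor `ρ`. The remaining bits are handled by induction, applied to
the shifted sequence `τ (· + 1)`, which satisfies the same relation. The same induction shows
`s p + s q + c = s (p + q + c) + k` for the number `k` of carries, so the truncated subtraction
`s p + s q - s (p + q)` is exactly `k`.
-/

def binB (n : ℕ) : Finset ℕ := (Finset.range (n + 1)).filter (fun i => n.testBit i)
def binS (n : ℕ) : ℕ := (binB n).card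

theorem binB_eq_toFinset_bitIndices (n : ℕ) : binB n = n.bitIndices.toFinset := by
  ext i
  simp only [binB, Finset.mem_filter, Finset.mem_range, List.mem_toFinset, Nat.mem_bitIndices,
    and_iff_right_iff_imp]
  intro h
  exact Nat.lt_succ_of_le ((Nat.lt_two_pow_self).le.trans (Nat.ge_two_pow_of_testBit h))

theorem binS_eq_length_bitIndices (n : ℕ) : binS n = n.bitIndices.length := by
  rw [binS, binB_eq_toFinset_bitIndices, List.toFinset_card_of_nodup Nat.bitIndices_nodup]

theorem binS_eq_mod_two_add_binS_div_two (n : ℕ) : binS n = n % 2 + binS (n / 2) := by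
  obtain ⟨m, rfl | rfl⟩ := Nat.even_or_odd' n <;>
    simp [binS_eq_length_bitIndices, Nat.mul_add_div]
  omega

section

variable {M : Type*} [CommMonoid M]

theorem prod_binB_eq_prod_bitIndices (τ : ℕ → M) (n : ℕ) :
    ∏ i ∈ binB n, τ i = (n.bitIndices.map τ).prod := by
  rw [binB_eq_toFinset_bitIndices, List.prod_toFinset _ Nat.bitIndices_nodup]

theorem prod_binB_eq_pow_mul_prod_binB_div_two (τ : ℕ → M) (n : ℕ) :
    ∏ i ∈ binB n, τ i = τ 0 ^ (n % 2) * ∏ i ∈ binB (n / 2), τ (i + 1) := by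
  obtain ⟨m, rfl | rfl⟩ := Nat.even_or_odd' n <;>
    simp [prod_binB_eq_prod_bitIndices, Nat.mul_add_div, Function.comp_def]

theorem exists_carries_prod_binB_mul_prod_binB (ρ : M) {τ : ℕ → M}
    (hτ : ∀ i, τ i ^ 2 = τ (i + 1) * ρ) {p q c : ℕ} (hc : c ≤ 1) :
    ∃ k, binS p + binS q + c = binS (p + q + c) + k ∧
      (∏ i ∈ binB p, τ i) * (∏ i ∈ binB q, τ i) * τ 0 ^ c =
        (∏ i ∈ binB (p + q + c), τ i) * ρ ^ k := by
  obtain ⟨n, hn⟩ : ∃ n, p + q + c = n := ⟨_, rfl⟩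
  induction n using Nat.strong_induction_on generalizing τ p q c with
  | _ n ih =>
  rw [hn]
  rcases Nat.eq_zero_or_pos n with rfl | hpos
  · obtain ⟨rfl, rfl, rfl⟩ : p = 0 ∧ q = 0 ∧ c = 0 := by omega
    exact ⟨0, rfl, by simp [prod_binB_eq_prod_bitIndices]⟩
  set c' := (p % 2 + q % 2 + c) / 2
  have hbits : p % 2 + q % 2 + c = n % 2 + 2 * c' := by omega
  obtain ⟨k, hcount, hprod⟩ := ih (n / 2) (by omega) (fun i => hτ (i + 1))
    (p := p / 2) (q := q / 2) (c := c') (by omega) (by omega)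
  rw [show p / 2 + q / 2 + c' = n / 2 by omega] at hcount hprod
  refine ⟨c' + k, ?_, ?_⟩
  · rw [binS_eq_mod_two_add_binS_div_two p, binS_eq_mod_two_add_binS_div_two q,
      binS_eq_mod_two_add_binS_div_two n]
    omega
  · rw [prod_binB_eq_pow_mul_prod_binB_div_two τ p, prod_binB_eq_pow_mul_prod_binB_div_two τ q,
      prod_binB_eq_pow_mul_prod_binB_div_two τ n]
    calc τ 0 ^ (p % 2) * (∏ i ∈ binB (p / 2), τ (i + 1)) *
            (τ 0 ^ (q % 2) * ∏ i ∈ binB (q / 2), τ (i + 1)) * τ 0 ^ c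
        = τ 0 ^ (n % 2) * (τ 0 ^ 2) ^ c' *
            ((∏ i ∈ binB (p / 2), τ (i + 1)) * ∏ i ∈ binB (q / 2), τ (i + 1)) := by
          rw [← pow_mul, ← pow_add, ← hbits, pow_add, pow_add]; ac_rfl
      _ = τ 0 ^ (n % 2) * ρ ^ c' *
            ((∏ i ∈ binB (p / 2), τ (i + 1)) * (∏ i ∈ binB (q / 2), τ (i + 1)) * τ 1 ^ c') := by
          rw [hτ 0, mul_pow]; ac_rfl
      _ = τ 0 ^ (n % 2) * (∏ i ∈ binB (n / 2), τ (i + 1)) * ρ ^ (c' + k) := by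
          rw [hprod, pow_add]; ac_rfl

end

/-- Let `R` be a commutative ring, `ρ ∈ R`, and `τ : ℕ → R` with
`τ i ^ 2 = τ (i+1) * ρ` for all `i`. With `T n = ∏_{i ∈ B(n)} τ i` (where `B(n)` is the
set of binary digits of `n`), one has `T p * T q = T (p+q) * ρ ^ σ(p,q)` for all
`p q : ℕ`, where `σ(p,q) = s(p) + s(q) − s(p+q)` is the number of carries in the binary
addition of `p` and `q` (`s` being the binary digit sum). -/
theorem stmt_10 {R : Type*} [CommRing R] (ρ : R) (τ : ℕ → R)
    (hτ : ∀ i : ℕ, τ i ^ 2 = τ (i + 1) * ρ) (p q : ℕ) :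
    (∏ i ∈ binB p, τ i) * (∏ i ∈ binB q, τ i) =
      (∏ i ∈ binB (p + q), τ i) * ρ ^ (binS p + binS q - binS (p + q)) := by
  obtain ⟨k, hcount, hprod⟩ :=
    exists_carries_prod_binB_mul_prod_binB ρ hτ (p := p) (q := q) (c := 0) zero_le_one
  simp only [add_zero, pow_zero, mul_one] at hcount hprod
  rwa [show binS p + binS q - binS (p + q) = k by omega]
end

section
/- Let R be a commutative ring, H a subring of R, t and r elements of H, and τ : ℕ → R, ξ : ℕ → R sequences with ξ(0) = 1 satisfying, for every k ∈ ℕ, the relation τ(k)² = ξ(k+1)·t + τ(0)·ξ(k+1)·r + τ(k+1)·r. Let M be the H-submodule of R generated by all monomials (∏_{i∈F} τ(i))·(∏_{j≥1} ξ(j)^{r_j}), where F ranges over the finite subsets of ℕ and (r_j)_{j≥1} over the finitely supported families of natural numbers. Then M is closed under multiplication; in particular every finite product τ(i₁)·τ(i₂)⋯τ(i_n) with arbitrary, possibly repeated, indices belongs to M. -/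
/-- Let `R` be a commutative ring, `H` a subring of `R`, `t, r ∈ H`,
and `τ ξ : ℕ → R` sequences with `ξ 0 = 1` satisfying for every `k` the relation
`τ k ^ 2 = ξ (k+1) * t + τ 0 * ξ (k+1) * r + τ (k+1) * r`. Let `M` be the `H`-submodule
of `R` generated by the monomials `(∏_{i ∈ F} τ i) * (∏_{j ≥ 1} ξ j ^ r_j)` for `F` a
finite subset of `ℕ` and `(r_j)_{j ≥ 1}` a finitely supported family of naturals. Then
`M` is closed under multiplication; in particular every finite product
`τ i₁ * ⋯ * τ iₙ` (indices possibly repeated) belongs to `M`. -/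
theorem stmt_11 {R : Type*} [CommRing R] (H : Subring R) (t r : H) (τ ξ : ℕ → R)
    (hξ0 : ξ 0 = 1)
    (hrel : ∀ k : ℕ, τ k ^ 2 =
      ξ (k + 1) * (t : R) + τ 0 * ξ (k + 1) * (r : R) + τ (k + 1) * (r : R))
    (M : Submodule H R)
    (hM : M = Submodule.span H {x : R | ∃ (F : Finset ℕ) (c : ℕ →₀ ℕ),
      x = (∏ i ∈ F, τ i) * ∏ j ∈ c.support, ξ (j + 1) ^ c j}) :
    (∀ x ∈ M, ∀ y ∈ M, x * y ∈ M) ∧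
    (∀ (n : ℕ) (f : Fin n → ℕ), (∏ i : Fin n, τ (f i)) ∈ M) := by
  subst hM
  set S : Set R := {x : R | ∃ (F : Finset ℕ) (c : ℕ →₀ ℕ),
      x = (∏ i ∈ F, τ i) * ∏ j ∈ c.support, ξ (j + 1) ^ c j} with hS
  -- ξ-monomials multiply
  have hxi : ∀ c d : ℕ →₀ ℕ,
      (∏ j ∈ c.support, ξ (j+1) ^ c j) * (∏ j ∈ d.support, ξ (j+1) ^ d j)
        = ∏ j ∈ (c+d).support, ξ (j+1) ^ (c+d) j := by
    intro c d
    have := Finsupp.prod_add_index' (f := c) (g := d)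
      (h := fun j n => ξ (j+1) ^ n) (fun a => pow_zero _)
      (fun a b₁ b₂ => pow_add _ _ _)
    simpa [Finsupp.prod] using this.symm
  have hsingle : ∀ (a : ℕ) (c : ℕ →₀ ℕ), ∀ c' : ℕ →₀ ℕ, c' = Finsupp.single a 1 + c →
      ξ (a+1) * (∏ j ∈ c.support, ξ (j+1) ^ c j)
        = ∏ j ∈ c'.support, ξ (j+1) ^ c' j := by
    intro a c c' hc'
    subst hc'
    rw [← hxi]
    congr 1
    rw [Finsupp.support_single_ne_zero a one_ne_zero]
    simp
  -- nodup case: generator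
  have gen : ∀ (m : Multiset ℕ), m.Nodup → ∀ c : ℕ →₀ ℕ,
      (m.map τ).prod * (∏ j ∈ c.support, ξ (j+1) ^ c j) ∈ Submodule.span H S := by
    intro m hnd c
    exact Submodule.subset_span ⟨⟨m, hnd⟩, c, rfl⟩
  -- main lemma
  have key : ∀ (n : ℕ) (m : Multiset ℕ), m.card ≤ n → ∀ c : ℕ →₀ ℕ,
      (m.map τ).prod * (∏ j ∈ c.support, ξ (j+1) ^ c j) ∈ Submodule.span H S := by
    intro n
    induction n with
    | zero =>
      intro m hm c
      exact gen m (by rw [Multiset.card_eq_zero.1 (Nat.le_zero.1 hm)]; exact Multiset.nodup_zero) c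
    | succ n ih =>
      intro m hm c
      by_cases hnd : m.Nodup
      · exact gen m hnd c
      · rw [Multiset.nodup_iff_count_le_one] at hnd
        push_neg at hnd
        obtain ⟨a, ha⟩ := hnd
        have ha2 : 2 ≤ m.count a := ha
        have ham : a ∈ m := Multiset.count_pos.1 (by omega)
        have ham' : a ∈ m.erase a := by
          rw [← Multiset.count_pos, Multiset.count_erase_self]; omega
        set m' := (m.erase a).erase a with hm'
        have hmeq : m = a ::ₘ a ::ₘ m' := by
          rw [hm', Multiset.cons_erase ham', Multiset.cons_erase ham]
        have hcard : m'.card + 1 ≤ n := by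
          have : m.card = m'.card + 2 := by rw [hmeq]; simp
          omega
        set X := ∏ j ∈ c.support, ξ (j+1) ^ c j with hX
        set c' := Finsupp.single a 1 + c with hc'
        set X' := ∏ j ∈ c'.support, ξ (j+1) ^ c' j with hX'
        have hXX : ξ (a+1) * X = X' := hsingle a c c' hc'
        set P := (m'.map τ).prod with hP
        have expand : (m.map τ).prod * X
            = (t : R) * (P * X') + (r : R) * (τ 0 * P * X') + (r : R) * (τ (a+1) * P * X) := by
          rw [hmeq, Multiset.map_cons, Multiset.map_cons, Multiset.prod_cons,
            Multiset.prod_cons]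
          have h2 : τ a * (τ a * P) * X = τ a ^ 2 * (P * X) := by ring
          rw [h2, hrel a]
          rw [← hXX]
          ring
        rw [expand]
        have h1 : (t : R) * (P * X') = t • (P * X') := by rw [Subring.smul_def, smul_eq_mul]
        have h2 : (r : R) * (τ 0 * P * X') = r • (((0 ::ₘ m').map τ).prod * X') := by
          rw [Subring.smul_def, smul_eq_mul, Multiset.map_cons, Multiset.prod_cons]
        have h3 : (r : R) * (τ (a+1) * P * X) = r • ((((a+1) ::ₘ m').map τ).prod * X) := by
          rw [Subring.smul_def, smul_eq_mul, Multiset.map_cons, Multiset.prod_cons]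
        rw [h1, h2, h3]
        refine add_mem (add_mem ?_ ?_) ?_
        · exact Submodule.smul_mem _ _ (ih m' (by omega) c')
        · exact Submodule.smul_mem _ _ (ih (0 ::ₘ m') (by simpa using hcard) c')
        · exact Submodule.smul_mem _ _ (ih ((a+1) ::ₘ m') (by simpa using hcard) c)
  have keyall : ∀ (m : Multiset ℕ) (c : ℕ →₀ ℕ),
      (m.map τ).prod * (∏ j ∈ c.support, ξ (j+1) ^ c j) ∈ Submodule.span H S :=
    fun m c => key m.card m le_rfl c
  constructor
  · -- closure under multiplication
    have hgen : ∀ x ∈ S, ∀ y ∈ S, x * y ∈ Submodule.span H S := by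
      rintro x ⟨F, c, rfl⟩ y ⟨G, d, rfl⟩
      have : (∏ i ∈ F, τ i) * (∏ j ∈ c.support, ξ (j+1) ^ c j)
            * ((∏ i ∈ G, τ i) * (∏ j ∈ d.support, ξ (j+1) ^ d j))
          = ((F.val + G.val).map τ).prod * (∏ j ∈ (c+d).support, ξ (j+1) ^ (c+d) j) := by
        have hF : (∏ i ∈ F, τ i) = (F.val.map τ).prod := rfl
        have hG : (∏ i ∈ G, τ i) = (G.val.map τ).prod := rfl
        rw [← hxi, Multiset.map_add, Multiset.prod_add, hF, hG]
        ring
      rw [this]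
      exact keyall _ _
    intro x hx y hy
    induction hx using Submodule.span_induction with
    | mem x hxS =>
      induction hy using Submodule.span_induction with
      | mem y hyS => exact hgen x hxS y hyS
      | zero => simpa using Submodule.zero_mem _
      | add y z _ _ hy hz => rw [mul_add]; exact add_mem hy hz
      | smul h y _ hy => rw [mul_smul_comm]; exact Submodule.smul_mem _ _ hy
    | zero => simpa using Submodule.zero_mem _
    | add a b _ _ ha hb => rw [add_mul]; exact add_mem ha hb
    | smul h a _ ha => rw [smul_mul_assoc]; exact Submodule.smul_mem _ _ ha
  · -- finite products of τ
    intro n f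
    have : (∏ i : Fin n, τ (f i))
        = ((Finset.univ.val.map f).map τ).prod * (∏ j ∈ (0 : ℕ →₀ ℕ).support, ξ (j+1) ^ (0 : ℕ →₀ ℕ) j) := by
      rw [Multiset.map_map]
      simp [Finset.prod]
    rw [this]
    exact keyall _ _
end
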